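/- arXiv:1006.5326 — 4 statements merged into one kernel-verified Lean document; each statement's English description precedes it below -/
import Mathlib

section
/- Let m be a positive integer and let B_1, ..., B_m be real skew-symmetric 3×3 matrices. Then Σ_{r,s=1}^m ‖[B_r,B_s]‖² ≤ (1/3)·(Σ_{r=1}^m ‖B_r‖²)². -/
open Matrix BigOperators

/-- Squared Frobenius norm of a real square matrix. -/
def frobSq {n : ℕ} (A : Matrix (Fin n) (Fin n) ℝ) : ℝ := ∑ i, ∑ j, (A i j) ^ 2

/-- Commutator of two square matrices. -/
def matComm {n : ℕ} (A B : Matrix (Fin n) (Fin n) ℝ) : Matrix (Fin n) (Fin n) ℝ :=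
  A * B - B * A

/-!
Identify a skew-symmetric `3 × 3` matrix `B` with the vector `b = (B₀₁, B₀₂, B₁₂)`. Then
`‖B‖² = 2|b|²` and, since the commutator corresponds to the cross product, Lagrange's identity
gives `‖[B, C]‖² = 2(|b|²|c|² - ⟨b, c⟩²)`. Summing over `r, s` turns the claim into
`(∑ |b_r|²)² ≤ 3 ∑_{r,s} ⟨b_r, b_s⟩²`. The right-hand side is `3‖G‖²` for the Gram matrix
`G = ∑ b_r b_rᵀ`, whose trace is `∑ |b_r|²`, so this is Cauchy–Schwarz on the diagonal of `G`.
-/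

section GramInequality

open Finset

variable {ι κ : Type*} [Fintype ι] [Fintype κ]

theorem sum_sq_dotProduct_eq_sum_sq_gram (v : ι → κ → ℝ) :
    ∑ r, ∑ s, (v r ⬝ᵥ v s) ^ 2 = ∑ i, ∑ j, (∑ r, v r i * v r j) ^ 2 := by
  simp only [dotProduct, sq, sum_mul_sum, ← Fintype.sum_prod_type']
  refine Fintype.sum_equiv ((Equiv.prodAssoc _ _ _).symm.trans
    ((Equiv.prodComm _ _).trans (Equiv.prodAssoc _ _ _))) _ _ fun _ => ?_
  simp only [Equiv.trans_apply, Equiv.prodAssoc_symm_apply, Equiv.prodComm_apply,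
    Prod.swap_prod_mk, Equiv.prodAssoc_apply]
  ring

theorem sq_sum_dotProduct_self_le (v : ι → κ → ℝ) :
    (∑ r, v r ⬝ᵥ v r) ^ 2 ≤ Fintype.card κ * ∑ r, ∑ s, (v r ⬝ᵥ v s) ^ 2 := by
  have htrace : ∑ r, v r ⬝ᵥ v r = ∑ i, ∑ r, v r i * v r i := by
    simp only [dotProduct]
    exact sum_comm
  calc (∑ r, v r ⬝ᵥ v r) ^ 2
      ≤ Fintype.card κ * ∑ i, (∑ r, v r i * v r i) ^ 2 := by
        rw [htrace]
        exact sq_sum_le_card_mul_sum_sq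
    _ ≤ Fintype.card κ * ∑ i, ∑ j, (∑ r, v r i * v r j) ^ 2 := by
        gcongr with i
        exact single_le_sum (f := fun j => (∑ r, v r i * v r j) ^ 2)
          (fun _ _ => sq_nonneg _) (mem_univ i)
    _ = _ := by rw [sum_sq_dotProduct_eq_sum_sq_gram]

end GramInequality

section SkewThree

theorem Matrix.apply_eq_neg_of_transpose_eq_neg {n α : Type*} [Neg α] {A : Matrix n n α}
    (hA : Aᵀ = -A) (i j : n) : A j i = -A i j := by
  simpa using congrFun (congrFun hA i) j

theorem Matrix.apply_self_eq_zero_of_transpose_eq_neg {n : Type*} {A : Matrix n n ℝ}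
    (hA : Aᵀ = -A) (i : n) : A i i = 0 := by
  linarith [apply_eq_neg_of_transpose_eq_neg hA i i]

def skewVec (A : Matrix (Fin 3) (Fin 3) ℝ) : Fin 3 → ℝ := ![A 0 1, A 0 2, A 1 2]

variable {A C : Matrix (Fin 3) (Fin 3) ℝ}

theorem frobSq_eq_of_transpose_eq_neg (hA : Aᵀ = -A) :
    frobSq A = 2 * (skewVec A ⬝ᵥ skewVec A) := by
  simp only [frobSq, skewVec, dotProduct, Fin.sum_univ_three, cons_val_zero, cons_val_one,
    cons_val_two, tail_cons, head_cons, apply_self_eq_zero_of_transpose_eq_neg hA,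
    apply_eq_neg_of_transpose_eq_neg hA 0 1, apply_eq_neg_of_transpose_eq_neg hA 0 2,
    apply_eq_neg_of_transpose_eq_neg hA 1 2]
  ring

theorem frobSq_matComm_of_transpose_eq_neg (hA : Aᵀ = -A) (hC : Cᵀ = -C) :
    frobSq (matComm A C) = 2 * ((skewVec A ⬝ᵥ skewVec A) * (skewVec C ⬝ᵥ skewVec C)
      - (skewVec A ⬝ᵥ skewVec C) ^ 2) := by
  simp only [frobSq, matComm, skewVec, dotProduct, Matrix.sub_apply, mul_apply,
    Fin.sum_univ_three, cons_val_zero, cons_val_one, cons_val_two, tail_cons, head_cons,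
    apply_self_eq_zero_of_transpose_eq_neg hA, apply_self_eq_zero_of_transpose_eq_neg hC,
    apply_eq_neg_of_transpose_eq_neg hA 0 1, apply_eq_neg_of_transpose_eq_neg hA 0 2,
    apply_eq_neg_of_transpose_eq_neg hA 1 2, apply_eq_neg_of_transpose_eq_neg hC 0 1,
    apply_eq_neg_of_transpose_eq_neg hC 0 2, apply_eq_neg_of_transpose_eq_neg hC 1 2]
  ring

end SkewThree

theorem ddvv_skew_three_general (m : ℕ)
    (B : Fin m → Matrix (Fin 3) (Fin 3) ℝ)
    (hskew : ∀ r, (B r)ᵀ = -B r) :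
    ∑ r, ∑ s, frobSq (matComm (B r) (B s)) ≤ (1 / 3) * (∑ r, frobSq (B r)) ^ 2 := by
  set b := fun r => skewVec (B r)
  have hnorm : ∑ r, frobSq (B r) = 2 * ∑ r, b r ⬝ᵥ b r := by
    simp only [frobSq_eq_of_transpose_eq_neg (hskew _), Finset.mul_sum, b]
  have hcomm : ∑ r, ∑ s, frobSq (matComm (B r) (B s)) =
      2 * ((∑ r, b r ⬝ᵥ b r) ^ 2 - ∑ r, ∑ s, (b r ⬝ᵥ b s) ^ 2) := by
    rw [sq, Finset.sum_mul_sum, ← Finset.sum_sub_distrib, Finset.mul_sum]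
    simp only [frobSq_matComm_of_transpose_eq_neg (hskew _) (hskew _), ← Finset.sum_sub_distrib,
      Finset.mul_sum, b]
  have hgram := sq_sum_dotProduct_self_le b
  rw [Fintype.card_fin, Nat.cast_ofNat] at hgram
  rw [hcomm, hnorm]
  linarith

/-- The optimal commutator inequality for real skew-symmetric `3 × 3` matrices. -/
theorem ddvv_skew_three (m : ℕ) (hm : 0 < m)
    (B : Fin m → Matrix (Fin 3) (Fin 3) ℝ)
    (hskew : ∀ r, (B r)ᵀ = -B r) :
    ∑ r, ∑ s, frobSq (matComm (B r) (B s)) ≤ (1 / 3) * (∑ r, frobSq (B r)) ^ 2 :=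
  ddvv_skew_three_general m B hskew
end

section
/- Let m ≥ 3 and let B_1, ..., B_m be real skew-symmetric 3×3 matrices. Then equality Σ_{r,s=1}^m ‖[B_r,B_s]‖² = (1/3)·(Σ_{r=1}^m ‖B_r‖²)² holds if and only if there exist P ∈ O(3), R ∈ O(m) and a real number λ ≥ 0 such that, setting C_s = Σ_{r=1}^m R_{rs} Pᵀ B_r P for each s, one has C_1 = K_1(λ), C_2 = K_2(λ), C_3 = K_3(λ), and C_s = 0 for all s ≥ 4, where K_1(λ) is the 3×3 skew-symmetric matrix with (1,2)-entry λ and (2,1)-entry −λ (all other entries 0), K_2(λ) has (1,3)-entry λ and (3,1)-entry −λ (all other entries 0), and K_3(λ) has (2,3)-entry λ and (3,2)-entry −λ (all other entries 0). -/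
/-!
A skew-symmetric `3 × 3` matrix is `crossMatrix v` for a unique `v ∈ ℝ³`; commutators become
cross products and `‖crossMatrix v‖² = 2 |v|²`. Writing the vectors of `B₁, …, Bₘ` as the rows of
an `m × 3` matrix `X` with Gram matrix `G = Xᵀ X`, Lagrange's identity gives
`∑ ‖[B_r, B_s]‖² = 2 ((tr G)² - ‖G‖²)` and `∑ ‖B_r‖² = 2 tr G`. Equality therefore means
`(tr G)² = 3 ‖G‖²`, i.e. `G = λ² • 1`. Two `m × 3` matrices with the same scalar Gram matrix differ
by an orthogonal matrix acting on the left, and the normal form `(K₁(λ), K₂(λ), K₃(λ), 0, …)` has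
Gram matrix `λ² • 1`; both sides of the equation are invariant under the `O(3) × O(m)` action.
-/

open Matrix BigOperators

/-- `K₁(λ)`: skew matrix with `(1,2)`-entry `λ`. -/
def K1 (l : ℝ) : Matrix (Fin 3) (Fin 3) ℝ := !![0, l, 0; -l, 0, 0; 0, 0, 0]

/-- `K₂(λ)`: skew matrix with `(1,3)`-entry `λ`. -/
def K2 (l : ℝ) : Matrix (Fin 3) (Fin 3) ℝ := !![0, 0, l; 0, 0, 0; -l, 0, 0]

/-- `K₃(λ)`: skew matrix with `(2,3)`-entry `λ`. -/
def K3 (l : ℝ) : Matrix (Fin 3) (Fin 3) ℝ := !![0, 0, 0; 0, 0, l; 0, -l, 0]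

lemma frobSq_eq_trace {n : ℕ} (A : Matrix (Fin n) (Fin n) ℝ) : frobSq A = trace (Aᵀ * A) := by
  simp only [frobSq, trace, diag, mul_apply, transpose_apply, sq]
  exact Finset.sum_comm

lemma frobSq_eq_zero_iff {n : ℕ} {A : Matrix (Fin n) (Fin n) ℝ} : frobSq A = 0 ↔ A = 0 := by
  rw [frobSq_eq_trace, ← conjTranspose_eq_transpose_of_trivial,
    trace_conjTranspose_mul_self_eq_zero_iff]

lemma frobSq_conj {n : ℕ} {P : Matrix (Fin n) (Fin n) ℝ}
    (hP : P ∈ orthogonalGroup (Fin n) ℝ) (A : Matrix (Fin n) (Fin n) ℝ) :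
    frobSq (Pᵀ * A * P) = frobSq A := by
  have hP' : P * Pᵀ = 1 := (mem_orthogonalGroup_iff _ _).mp hP
  rw [frobSq_eq_trace, frobSq_eq_trace, transpose_mul, transpose_mul, transpose_transpose,
    show Pᵀ * (Aᵀ * P) * (Pᵀ * A * P) = Pᵀ * (Aᵀ * (P * Pᵀ) * A) * P by noncomm_ring, hP',
    Matrix.mul_one, trace_mul_cycle, hP', Matrix.one_mul]

lemma matComm_conj {n : ℕ} {P : Matrix (Fin n) (Fin n) ℝ}
    (hP : P ∈ orthogonalGroup (Fin n) ℝ) (A B : Matrix (Fin n) (Fin n) ℝ) :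
    matComm (Pᵀ * A * P) (Pᵀ * B * P) = Pᵀ * matComm A B * P := by
  have hP' : P * Pᵀ = 1 := (mem_orthogonalGroup_iff _ _).mp hP
  simp only [matComm]
  calc Pᵀ * A * P * (Pᵀ * B * P) - Pᵀ * B * P * (Pᵀ * A * P)
      = Pᵀ * (A * (P * Pᵀ) * B - B * (P * Pᵀ) * A) * P := by noncomm_ring
    _ = Pᵀ * (A * B - B * A) * P := by rw [hP', Matrix.mul_one, Matrix.mul_one]

lemma frobSq_sub_smul_one {n : ℕ} (G : Matrix (Fin n) (Fin n) ℝ) (c : ℝ) :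
    frobSq (G - c • 1) = frobSq G - 2 * c * trace G + n * c ^ 2 := by
  have h : (G - c • 1)ᵀ * (G - c • 1) = Gᵀ * G - c • Gᵀ - c • G + c ^ 2 • 1 := by
    simp only [transpose_sub, transpose_smul, transpose_one, sub_mul, mul_sub, Matrix.smul_mul,
      Matrix.mul_smul, Matrix.mul_one, Matrix.one_mul, smul_smul]
    module
  simp only [frobSq_eq_trace, h, trace_add, trace_sub, trace_smul, trace_transpose, trace_one,
    Fintype.card_fin, smul_eq_mul]
  ring

lemma sq_trace_eq_mul_frobSq_iff {n : ℕ} (G : Matrix (Fin n) (Fin n) ℝ) :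
    trace G ^ 2 = n * frobSq G ↔ ∃ c : ℝ, G = c • 1 := by
  constructor
  · intro h
    rcases Nat.eq_zero_or_pos n with rfl | hn
    · exact ⟨0, Subsingleton.elim _ _⟩
    refine ⟨trace G / n, sub_eq_zero.mp (frobSq_eq_zero_iff.mp ?_)⟩
    rw [frobSq_sub_smul_one]
    field_simp
    linear_combination -h
  · rintro ⟨c, rfl⟩
    simp [frobSq_eq_trace, trace_smul]
    ring

lemma transpose_conj_eq_neg {n α : Type*} [Fintype n] [CommRing α] {A : Matrix n n α}
    (hA : Aᵀ = -A) (P : Matrix n n α) : (Pᵀ * A * P)ᵀ = -(Pᵀ * A * P) := by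
  rw [transpose_mul, transpose_mul, transpose_transpose, hA]
  noncomm_ring

def crossMatrix : (Fin 3 → ℝ) →ₗ[ℝ] Matrix (Fin 3) (Fin 3) ℝ where
  toFun v := !![0, -v 2, v 1; v 2, 0, -v 0; -v 1, v 0, 0]
  map_add' v w := by ext i j; fin_cases i <;> fin_cases j <;> simp <;> ring
  map_smul' c v := by ext i j; fin_cases i <;> fin_cases j <;> simp

lemma crossMatrix_apply (v : Fin 3 → ℝ) :
    crossMatrix v = !![0, -v 2, v 1; v 2, 0, -v 0; -v 1, v 0, 0] := rfl

lemma crossMatrix_injective : Function.Injective crossMatrix := by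
  intro v w h
  have hij : ∀ i j, crossMatrix v i j = crossMatrix w i j := fun i j => by rw [h]
  ext k
  fin_cases k
  · simpa [crossMatrix_apply] using hij 2 1
  · simpa [crossMatrix_apply] using hij 0 2
  · simpa [crossMatrix_apply] using hij 1 0

lemma exists_crossMatrix_eq {B : Matrix (Fin 3) (Fin 3) ℝ} (hB : Bᵀ = -B) :
    ∃ v, crossMatrix v = B := by
  have h : ∀ i j, B j i = -B i j := fun i j => by simpa using congrFun (congrFun hB i) j
  refine ⟨![B 2 1, B 0 2, B 1 0], ?_⟩
  ext i j
  fin_cases i <;> fin_cases j <;> simp [crossMatrix_apply] <;>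
    linarith [h 0 0, h 1 1, h 2 2, h 0 1, h 0 2, h 1 2]

lemma frobSq_crossMatrix (v : Fin 3 → ℝ) : frobSq (crossMatrix v) = 2 * (v ⬝ᵥ v) := by
  simp [frobSq, crossMatrix_apply, Fin.sum_univ_three, vec3_dotProduct]; ring

lemma matComm_crossMatrix (v w : Fin 3 → ℝ) :
    matComm (crossMatrix v) (crossMatrix w) = crossMatrix (v ⨯₃ w) := by
  ext i j
  fin_cases i <;> fin_cases j <;> simp [matComm, crossMatrix_apply, cross_apply] <;> ring

lemma frobSq_matComm_crossMatrix (v w : Fin 3 → ℝ) :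
    frobSq (matComm (crossMatrix v) (crossMatrix w)) =
      2 * ((v ⬝ᵥ v) * (w ⬝ᵥ w) - (v ⬝ᵥ w) ^ 2) := by
  rw [matComm_crossMatrix, frobSq_crossMatrix, cross_dot_cross, dotProduct_comm w v, sq]

lemma sum_smul_crossMatrix {m : ℕ} (R : Matrix (Fin m) (Fin m) ℝ) (X : Matrix (Fin m) (Fin 3) ℝ)
    (s : Fin m) : ∑ r, R r s • crossMatrix (X r) = crossMatrix ((Rᵀ * X) s) := by
  have hrow : (Rᵀ * X) s = ∑ r, R r s • X r := by
    ext j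
    simp [mul_apply, Finset.sum_apply]
  simp only [hrow, map_sum, map_smul]

lemma frobSq_mul_transpose_self {m n : ℕ} (X : Matrix (Fin m) (Fin n) ℝ) :
    frobSq (X * Xᵀ) = frobSq (Xᵀ * X) := by
  rw [frobSq_eq_trace, frobSq_eq_trace]
  calc trace ((X * Xᵀ)ᵀ * (X * Xᵀ)) = trace (X * (Xᵀ * X * Xᵀ)) := by
        simp only [transpose_mul, transpose_transpose, Matrix.mul_assoc]
    _ = trace (Xᵀ * X * Xᵀ * X) := trace_mul_comm _ _
    _ = trace ((Xᵀ * X)ᵀ * (Xᵀ * X)) := by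
        simp only [transpose_mul, transpose_transpose, Matrix.mul_assoc]

lemma sum_frobSq_crossMatrix {m : ℕ} (X : Matrix (Fin m) (Fin 3) ℝ) :
    ∑ r, frobSq (crossMatrix (X r)) = 2 * trace (Xᵀ * X) := by
  simp only [frobSq_crossMatrix, ← Finset.mul_sum, ← trace_mul_comm X]
  rfl

lemma sum_sum_frobSq_matComm_crossMatrix {m : ℕ} (X : Matrix (Fin m) (Fin 3) ℝ) :
    ∑ r, ∑ s, frobSq (matComm (crossMatrix (X r)) (crossMatrix (X s))) =
      2 * (trace (Xᵀ * X) ^ 2 - frobSq (Xᵀ * X)) := by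
  calc ∑ r, ∑ s, frobSq (matComm (crossMatrix (X r)) (crossMatrix (X s)))
      = ∑ r, ∑ s, 2 * ((X * Xᵀ) r r * (X * Xᵀ) s s - (X * Xᵀ) r s ^ 2) := by
        simp only [frobSq_matComm_crossMatrix]; rfl
    _ = 2 * (trace (X * Xᵀ) ^ 2 - frobSq (X * Xᵀ)) := by
        rw [sq (trace _), trace, Finset.sum_mul_sum, frobSq, ← Finset.sum_sub_distrib,
          Finset.mul_sum]
        simp only [diag, ← Finset.sum_sub_distrib, Finset.mul_sum]
    _ = 2 * (trace (Xᵀ * X) ^ 2 - frobSq (Xᵀ * X)) := by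
        rw [trace_mul_comm, frobSq_mul_transpose_self]

theorem sum_sum_frobSq_matComm_crossMatrix_eq_iff {m : ℕ} (X : Matrix (Fin m) (Fin 3) ℝ) :
    ∑ r, ∑ s, frobSq (matComm (crossMatrix (X r)) (crossMatrix (X s))) =
        1 / 3 * (∑ r, frobSq (crossMatrix (X r))) ^ 2 ↔ ∃ l : ℝ, Xᵀ * X = l ^ 2 • 1 := by
  rw [sum_sum_frobSq_matComm_crossMatrix, sum_frobSq_crossMatrix]
  calc _ ↔ trace (Xᵀ * X) ^ 2 = (3 : ℕ) * frobSq (Xᵀ * X) := by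
        push_cast; constructor <;> intro h <;> linarith
    _ ↔ ∃ c : ℝ, Xᵀ * X = c • 1 := sq_trace_eq_mul_frobSq_iff _
    _ ↔ ∃ l : ℝ, Xᵀ * X = l ^ 2 • 1 := by
        refine ⟨fun ⟨c, hc⟩ => ⟨√c, ?_⟩, fun ⟨l, hl⟩ => ⟨l ^ 2, hl⟩⟩
        have hc0 : 0 ≤ c := by
          have h00 := congrFun (congrFun hc 0) 0
          simp only [mul_apply, transpose_apply, Matrix.smul_apply, one_apply_eq, smul_eq_mul,
            mul_one] at h00
          exact h00 ▸ Finset.sum_nonneg fun r _ => mul_self_nonneg _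
        rw [Real.sq_sqrt hc0, hc]

lemma transpose_mul_self_of_mem_orthogonalGroup_mul {ι κ : Type*} [Fintype ι] [DecidableEq ι]
    {R : Matrix ι ι ℝ} (hR : R ∈ orthogonalGroup ι ℝ) (Y : Matrix ι κ ℝ) :
    (R * Y)ᵀ * (R * Y) = Yᵀ * Y := by
  rw [transpose_mul, Matrix.mul_assoc, ← Matrix.mul_assoc Rᵀ, (mem_orthogonalGroup_iff' _ _).mp hR,
    Matrix.one_mul]

lemma orthonormal_toLp_transpose {ι κ : Type*} [Fintype ι] [DecidableEq κ] {U : Matrix ι κ ℝ}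
    (hU : Uᵀ * U = 1) : Orthonormal ℝ fun i => WithLp.toLp 2 (Uᵀ i) := by
  rw [orthonormal_iff_ite]
  intro i j
  rw [EuclideanSpace.inner_toLp_toLp, star_trivial, dotProduct_comm, ← one_apply, ← hU]
  rfl

lemma exists_mem_orthogonalGroup_mul_submatrix_one {ι κ : Type*} [Fintype ι] [DecidableEq ι]
    [DecidableEq κ] (e : κ ↪ ι) {U : Matrix ι κ ℝ} (hU : Uᵀ * U = 1) :
    ∃ V ∈ orthogonalGroup ι ℝ, V * (1 : Matrix ι ι ℝ).submatrix id e = U := by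
  set u : κ → EuclideanSpace ℝ ι := fun i => WithLp.toLp 2 (Uᵀ i)
  have hres : (Set.range e).domRestrict (Function.extend e u 0) =
      u ∘ (Equiv.ofInjective e e.injective).symm := by
    ext ⟨_, i, rfl⟩ : 1
    simp [Set.domRestrict_apply, e.injective.extend_apply]
  obtain ⟨b, hb⟩ := Orthonormal.exists_orthonormalBasis_extension_of_card_eq
    (v := Function.extend e u 0) (s := Set.range e) (by simp)
    (hres ▸ (orthonormal_toLp_transpose hU).comp _ (Equiv.injective _))
  refine ⟨(EuclideanSpace.basisFun ι ℝ).toBasis.toMatrix b,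
    OrthonormalBasis.toMatrix_orthonormalBasis_mem_orthogonal _ _, ?_⟩
  ext r i
  simp [mul_apply, one_apply, Module.Basis.toMatrix_apply, hb (e i) ⟨i, rfl⟩,
    e.injective.extend_apply, u]

lemma exists_mem_orthogonalGroup_mul_eq {ι κ : Type*} [Fintype ι] [DecidableEq ι] [Fintype κ]
    [DecidableEq κ] {V W : Matrix ι κ ℝ} {l : ℝ} (hV : Vᵀ * V = l ^ 2 • 1)
    (hW : Wᵀ * W = l ^ 2 • 1) : ∃ R ∈ orthogonalGroup ι ℝ, R * V = W := by
  rcases eq_or_ne l 0 with rfl | hl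
  · have eq_zero : ∀ {X : Matrix ι κ ℝ}, Xᵀ * X = (0 : ℝ) ^ 2 • 1 → X = 0 := fun hX => by
      rwa [zero_pow two_ne_zero, zero_smul, ← conjTranspose_eq_transpose_of_trivial,
        conjTranspose_mul_self_eq_zero] at hX
    exact ⟨1, one_mem _, by rw [eq_zero hV, eq_zero hW, Matrix.mul_zero]⟩
  have normalize : ∀ {X : Matrix ι κ ℝ}, Xᵀ * X = l ^ 2 • 1 → (l⁻¹ • X)ᵀ * (l⁻¹ • X) = 1 :=
    fun hX => by
      rw [transpose_smul, Matrix.smul_mul, Matrix.mul_smul, hX, smul_smul, smul_smul,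
        show l⁻¹ * l⁻¹ * l ^ 2 = 1 by field_simp, one_smul]
  obtain ⟨e⟩ : Nonempty (κ ↪ ι) := Function.Embedding.nonempty_of_card_le <| by
    simpa using (orthonormal_toLp_transpose (normalize hV)).linearIndependent.fintype_card_le_finrank
  obtain ⟨A, hA, hAV⟩ := exists_mem_orthogonalGroup_mul_submatrix_one e (normalize hV)
  obtain ⟨B, hB, hBW⟩ := exists_mem_orthogonalGroup_mul_submatrix_one e (normalize hW)
  refine ⟨B * Aᵀ, mul_mem hB (transpose_mem_unitaryGroup_iff.mpr hA), ?_⟩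
  have hAA : Aᵀ * A = 1 := (mem_orthogonalGroup_iff' _ _).mp hA
  calc B * Aᵀ * V = l • (B * (Aᵀ * A) * (1 : Matrix ι ι ℝ).submatrix id e) := by
        rw [Matrix.mul_assoc B, Matrix.mul_assoc, Matrix.mul_assoc, hAV, Matrix.mul_smul,
          Matrix.mul_smul, smul_smul, mul_inv_cancel₀ hl, one_smul]
    _ = W := by
        rw [hAA, Matrix.mul_one, hBW, smul_smul, mul_inv_cancel₀ hl, one_smul]

/-- Its rows are the axial vectors of `K1 1`, `K2 1` and `K3 1`. -/
def ddvvFrame : Matrix (Fin 3) (Fin 3) ℝ := !![0, 0, -1; 0, 1, 0; -1, 0, 0]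

def ddvvNormalForm (m : ℕ) (l : ℝ) (s : Fin m) : Matrix (Fin 3) (Fin 3) ℝ :=
  if (s : ℕ) = 0 then K1 l else if (s : ℕ) = 1 then K2 l else if (s : ℕ) = 2 then K3 l else 0

def ddvvNormalVectors {m : ℕ} (hm : 3 ≤ m) (l : ℝ) : Matrix (Fin m) (Fin 3) ℝ :=
  l • (1 : Matrix (Fin m) (Fin m) ℝ).submatrix id (Fin.castLE hm) * ddvvFrame

lemma transpose_mul_ddvvNormalVectors {m : ℕ} (hm : 3 ≤ m) (l : ℝ) :
    (ddvvNormalVectors hm l)ᵀ * ddvvNormalVectors hm l = l ^ 2 • 1 := by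
  have hE : ((1 : Matrix (Fin m) (Fin m) ℝ).submatrix id (Fin.castLE hm))ᵀ *
      (1 : Matrix (Fin m) (Fin m) ℝ).submatrix id (Fin.castLE hm) = 1 := by
    ext i j
    simp [mul_apply, one_apply]
  have hQ : ddvvFrameᵀ * ddvvFrame = 1 := by
    ext i j
    fin_cases i <;> fin_cases j <;> simp [ddvvFrame, mul_apply, Fin.sum_univ_three]
  simp only [ddvvNormalVectors, transpose_mul, transpose_smul, Matrix.smul_mul, Matrix.mul_smul,
    smul_smul, Matrix.mul_assoc]
  rw [← Matrix.mul_assoc _ _ ddvvFrame, hE, Matrix.one_mul, hQ, sq]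

lemma crossMatrix_ddvvNormalVectors {m : ℕ} (hm : 3 ≤ m) (l : ℝ) (s : Fin m) :
    crossMatrix (ddvvNormalVectors hm l s) = ddvvNormalForm m l s := by
  by_cases hs : (s : ℕ) < 3
  · obtain ⟨i, rfl⟩ : ∃ i : Fin 3, Fin.castLE hm i = s := ⟨⟨s, hs⟩, rfl⟩
    have hrow : ddvvNormalVectors hm l (Fin.castLE hm i) = l • ddvvFrame i := by
      ext j
      simp [ddvvNormalVectors, mul_apply, one_apply]
    rw [hrow]
    fin_cases i <;> ext a b <;> fin_cases a <;> fin_cases b <;>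
      simp [ddvvFrame, ddvvNormalForm, crossMatrix_apply, K1, K2, K3]
  · have hrow : ddvvNormalVectors hm l s = 0 := by
      ext j
      have hne : ∀ i : Fin 3, s ≠ Fin.castLE hm i := fun i h => hs (h ▸ i.isLt)
      simp [ddvvNormalVectors, mul_apply, one_apply, hne]
    rw [hrow, map_zero, ddvvNormalForm, if_neg (by omega), if_neg (by omega), if_neg (by omega)]

/-- Equality characterization in the commutator inequality for skew-symmetric
`3 × 3` matrices. -/
theorem ddvv_skew_three_equality (m : ℕ) (hm : 3 ≤ m)
    (B : Fin m → Matrix (Fin 3) (Fin 3) ℝ)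
    (hskew : ∀ r, (B r)ᵀ = -B r) :
    (∑ r, ∑ s, frobSq (matComm (B r) (B s)) = (1 / 3) * (∑ r, frobSq (B r)) ^ 2) ↔
      ∃ P ∈ Matrix.orthogonalGroup (Fin 3) ℝ, ∃ R ∈ Matrix.orthogonalGroup (Fin m) ℝ,
        ∃ l : ℝ, 0 ≤ l ∧
          (fun s : Fin m => ∑ r, R r s • (Pᵀ * B r * P)) =
            fun s : Fin m =>
              if (s : ℕ) = 0 then K1 l
              else if (s : ℕ) = 1 then K2 l
              else if (s : ℕ) = 2 then K3 l
              else 0 := by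
  obtain ⟨X, hX⟩ : ∃ X : Matrix (Fin m) (Fin 3) ℝ, ∀ r, crossMatrix (X r) = B r :=
    Classical.skolem.mp fun r => exists_crossMatrix_eq (hskew r)
  constructor
  · intro h
    obtain ⟨l, hl⟩ := (sum_sum_frobSq_matComm_crossMatrix_eq_iff X).mp (by simpa only [hX] using h)
    obtain ⟨R, hR, hRX⟩ := exists_mem_orthogonalGroup_mul_eq hl
      ((transpose_mul_ddvvNormalVectors hm |l|).trans (by rw [sq_abs]))
    refine ⟨1, one_mem _, Rᵀ, transpose_mem_unitaryGroup_iff.mpr hR, |l|, abs_nonneg l,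
      funext fun s => ?_⟩
    simp only [transpose_one, Matrix.one_mul, Matrix.mul_one, ← hX, sum_smul_crossMatrix,
      transpose_transpose, hRX, crossMatrix_ddvvNormalVectors]
    rfl
  · rintro ⟨P, hP, R, hR, l, -, hC⟩
    obtain ⟨Y, hY⟩ : ∃ Y : Matrix (Fin m) (Fin 3) ℝ, ∀ r, crossMatrix (Y r) = Pᵀ * B r * P :=
      Classical.skolem.mp fun r => exists_crossMatrix_eq (transpose_conj_eq_neg (hskew r) P)
    have hRY : Rᵀ * Y = ddvvNormalVectors hm l := by
      refine funext fun s => crossMatrix_injective ?_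
      rw [← sum_smul_crossMatrix, crossMatrix_ddvvNormalVectors]
      simp only [hY]
      exact congrFun hC s
    have hgram : Yᵀ * Y = l ^ 2 • 1 := by
      rw [← transpose_mul_self_of_mem_orthogonalGroup_mul (transpose_mem_unitaryGroup_iff.mpr hR),
        hRY, transpose_mul_ddvvNormalVectors]
    simpa only [hY, matComm_conj hP, frobSq_conj hP] using
      (sum_sum_frobSq_matComm_crossMatrix_eq_iff Y).mpr ⟨l, hgram⟩
end

section
/- Let n, m be positive integers, N = n(n+1)/2, and let Ê_1, ..., Ê_N be an orthonormal basis (for the Frobenius inner product) of the space of real symmetric n×n matrices. Let B_1, ..., B_m be real symmetric n×n matrices and let B be the N×m real matrix of coordinates, i.e. B_r = Σ_{α=1}^N B_{αr} Ê_α for each r. Suppose Q ∈ SO(N) and x_1, ..., x_N ≥ 0 satisfy B Bᵀ = Q · diag(x_1,...,x_N) · Qᵀ, and define Q̂_α = Σ_{β=1}^N Q_{βα} Ê_β for each α. Then Σ_{r=1}^m ‖B_r‖² = Σ_{α=1}^N x_α and Σ_{r,s=1}^m ‖[B_r,B_s]‖² = Σ_{α,β=1}^N x_α x_β ‖[Q̂_α,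 Q̂_β]‖². -/
open Matrix BigOperators

/-- Frobenius inner product of two real square matrices. -/
def frobInner {n : ℕ} (A B : Matrix (Fin n) (Fin n) ℝ) : ℝ := ∑ i, ∑ j, A i j * B i j

/-!
Put `C = Qᵀ Bc`. Then `C Cᵀ = diag x` and `B r = ∑ α, C α r • Q̂ α`, so both identities are
instances of one fact about an arbitrary bilinear form `b`: if `v r = ∑ α, C α r • w α` with
`C Cᵀ = diag x`, then `∑ r, b (v r) (v r) = ∑ α, x α * b (w α) (w α)`. For the first identity take
`b` the Frobenius form and use that the `Q̂ α` are orthonormal, `Q` being orthogonal; for the second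
apply the same fact twice, once in each argument of the (bilinear) commutator.
-/

section Gram

variable {R M N P : Type*} [CommSemiring R] [AddCommMonoid M] [Module R M]
  [AddCommMonoid N] [Module R N] [AddCommMonoid P] [Module R P]
  {ι κ : Type*} [Fintype ι]

theorem Matrix.sum_mul_apply_smul {ι' : Type*} [Fintype ι'] (Q : Matrix ι' ι R)
    (C : Matrix ι κ R) (e : ι' → M) (r : κ) :
    ∑ γ, (Q * C) γ r • e γ = ∑ α, C α r • ∑ γ, Q γ α • e γ := by
  simp only [mul_apply, Finset.sum_smul, Finset.smul_sum, smul_smul, mul_comm]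
  exact Finset.sum_comm

variable [Fintype κ]

theorem LinearMap.apply_sum_smul_sum_smul (b : M →ₗ[R] N →ₗ[R] P) (c : ι → R) (d : κ → R)
    (v : ι → M) (w : κ → N) :
    b (∑ i, c i • v i) (∑ j, d j • w j) = ∑ i, ∑ j, (c i * d j) • b (v i) (w j) := by
  simp only [map_sum, map_smul, LinearMap.sum_apply, LinearMap.smul_apply, Finset.smul_sum,
    smul_smul]
  rw [Finset.sum_comm]
  simp only [mul_comm]

theorem LinearMap.apply_sum_smul_sum_smul_of_orthonormal [DecidableEq ι]
    (b : M →ₗ[R] M →ₗ[R] R) {e : ι → M} (he : ∀ i j, b (e i) (e j) = if i = j then 1 else 0)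
    (c d : ι → R) :
    b (∑ i, c i • e i) (∑ i, d i • e i) = c ⬝ᵥ d := by
  rw [apply_sum_smul_sum_smul]
  simp [he, dotProduct]

variable [DecidableEq ι] {C : Matrix ι κ R} {x : ι → R}

theorem LinearMap.sum_apply_self_of_mul_transpose_eq_diagonal (b : M →ₗ[R] M →ₗ[R] R)
    (hC : C * Cᵀ = diagonal x) (w : ι → M) (v : κ → M) (hv : ∀ r, v r = ∑ α, C α r • w α) :
    ∑ r, b (v r) (v r) = ∑ α, x α * b (w α) (w α) := by
  calc ∑ r, b (v r) (v r) = ∑ α, ∑ β, (C * Cᵀ) α β * b (w α) (w β) := by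
        simp only [hv, apply_sum_smul_sum_smul, smul_eq_mul, mul_apply, transpose_apply,
          Finset.sum_mul]
        rw [Finset.sum_comm]
        exact Finset.sum_congr rfl fun α _ => Finset.sum_comm
    _ = ∑ α, x α * b (w α) (w α) := by simp [hC, diagonal_apply]

theorem LinearMap.sum_sum_apply_self_of_mul_transpose_eq_diagonal (b : N →ₗ[R] N →ₗ[R] R)
    (φ : M →ₗ[R] M →ₗ[R] N) (hC : C * Cᵀ = diagonal x) (w : ι → M) (v : κ → M)
    (hv : ∀ r, v r = ∑ α, C α r • w α) :
    ∑ r, ∑ s, b (φ (v r) (v s)) (φ (v r) (v s)) =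
      ∑ α, ∑ β, x α * x β * b (φ (w α) (w β)) (φ (w α) (w β)) := by
  calc ∑ r, ∑ s, b (φ (v r) (v s)) (φ (v r) (v s))
      = ∑ s, ∑ α, x α * b (φ (w α) (v s)) (φ (w α) (v s)) := by
        rw [Finset.sum_comm]
        refine Finset.sum_congr rfl fun s _ =>
          b.sum_apply_self_of_mul_transpose_eq_diagonal hC _ _ fun r => by
            rw [hv r]; simp only [map_sum, map_smul, LinearMap.sum_apply, LinearMap.smul_apply]
    _ = ∑ α, x α * ∑ β, x β * b (φ (w α) (w β)) (φ (w α) (w β)) := by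
        rw [Finset.sum_comm]
        refine Finset.sum_congr rfl fun α _ => ?_
        rw [← Finset.mul_sum, b.sum_apply_self_of_mul_transpose_eq_diagonal hC
          (fun β => φ (w α) (w β)) (fun s => φ (w α) (v s))
          fun s => by rw [hv s]; simp only [map_sum, map_smul]]
    _ = _ := by simp only [Finset.mul_sum, mul_assoc]

end Gram

def frobInnerBilin (n : ℕ) : Matrix (Fin n) (Fin n) ℝ →ₗ[ℝ] Matrix (Fin n) (Fin n) ℝ →ₗ[ℝ] ℝ :=
  LinearMap.mk₂ ℝ frobInner
    (fun _ _ _ => by simp only [frobInner, Matrix.add_apply, add_mul, Finset.sum_add_distrib])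
    (fun _ _ _ => by
      simp only [frobInner, Matrix.smul_apply, smul_eq_mul, Finset.mul_sum, mul_assoc])
    (fun _ _ _ => by simp only [frobInner, Matrix.add_apply, mul_add, Finset.sum_add_distrib])
    (fun _ _ _ => by
      simp only [frobInner, Matrix.smul_apply, smul_eq_mul, Finset.mul_sum, mul_left_comm])

@[simp] theorem frobInnerBilin_apply {n : ℕ} (A B : Matrix (Fin n) (Fin n) ℝ) :
    frobInnerBilin n A B = frobInner A B := rfl

def matCommBilin (n : ℕ) :
    Matrix (Fin n) (Fin n) ℝ →ₗ[ℝ] Matrix (Fin n) (Fin n) ℝ →ₗ[ℝ] Matrix (Fin n) (Fin n) ℝ :=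
  LinearMap.mul ℝ _ - (LinearMap.mul ℝ _).flip

@[simp] theorem matCommBilin_apply {n : ℕ} (A B : Matrix (Fin n) (Fin n) ℝ) :
    matCommBilin n A B = matComm A B := rfl

theorem frobSq_eq_frobInner {n : ℕ} (A : Matrix (Fin n) (Fin n) ℝ) :
    frobSq A = frobInner A A := by
  simp only [frobSq, frobInner, sq]

theorem Matrix.mul_transpose_eq_one_and_transpose_mul_eq_one {ι : Type*} [Fintype ι]
    [DecidableEq ι] {Q : Matrix ι ι ℝ} (hQ : Q ∈ specialOrthogonalGroup ι ℝ) :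
    Q * Qᵀ = 1 ∧ Qᵀ * Q = 1 := by
  have := (mem_specialOrthogonalGroup_iff.mp hQ).1
  exact ⟨(mem_orthogonalGroup_iff _ _).mp this, (mem_orthogonalGroup_iff' _ _).mp this⟩

theorem ddvv_translation_general (n m : ℕ)
    (Ehat : Fin (n * (n + 1) / 2) → Matrix (Fin n) (Fin n) ℝ)
    (hEorth : ∀ α β, frobInner (Ehat α) (Ehat β) = if α = β then 1 else 0)
    (B : Fin m → Matrix (Fin n) (Fin n) ℝ)
    (Bc : Matrix (Fin (n * (n + 1) / 2)) (Fin m) ℝ)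
    (hBc : ∀ r, B r = ∑ α, Bc α r • Ehat α)
    (Q : Matrix (Fin (n * (n + 1) / 2)) (Fin (n * (n + 1) / 2)) ℝ)
    (hQ : Q ∈ Matrix.specialOrthogonalGroup (Fin (n * (n + 1) / 2)) ℝ)
    (x : Fin (n * (n + 1) / 2) → ℝ)
    (hdiag : Bc * Bcᵀ = Q * Matrix.diagonal x * Qᵀ)
    (Qhat : Fin (n * (n + 1) / 2) → Matrix (Fin n) (Fin n) ℝ)
    (hQhat : ∀ α, Qhat α = ∑ β, Q β α • Ehat β) :
    (∑ r, frobSq (B r) = ∑ α, x α) ∧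
      (∑ r, ∑ s, frobSq (matComm (B r) (B s)) =
        ∑ α, ∑ β, x α * x β * frobSq (matComm (Qhat α) (Qhat β))) := by
  obtain ⟨hQQt, hQtQ⟩ := mul_transpose_eq_one_and_transpose_mul_eq_one hQ
  set C := Qᵀ * Bc
  have hCC : C * Cᵀ = diagonal x :=
    calc C * Cᵀ = Qᵀ * (Bc * Bcᵀ) * Q := by
          simp only [C, transpose_mul, transpose_transpose, Matrix.mul_assoc]
      _ = (Qᵀ * Q) * diagonal x * (Qᵀ * Q) := by rw [hdiag]; simp only [Matrix.mul_assoc]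
      _ = diagonal x := by rw [hQtQ, Matrix.one_mul, Matrix.mul_one]
  have hB : ∀ r, B r = ∑ α, C α r • Qhat α := fun r => by
    simp only [hBc, hQhat, ← sum_mul_apply_smul, C, ← Matrix.mul_assoc, hQQt, Matrix.one_mul]
  have hQhat_unit : ∀ α, frobInner (Qhat α) (Qhat α) = 1 := fun α => by
    rw [hQhat, ← frobInnerBilin_apply,
      (frobInnerBilin n).apply_sum_smul_sum_smul_of_orthonormal hEorth]
    simpa [mul_apply, dotProduct] using congrFun₂ hQtQ α α
  simp only [frobSq_eq_frobInner, ← frobInnerBilin_apply, ← matCommBilin_apply]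
  refine ⟨?_, (frobInnerBilin n).sum_sum_apply_self_of_mul_transpose_eq_diagonal
    (matCommBilin n) hCC Qhat B hB⟩
  rw [(frobInnerBilin n).sum_apply_self_of_mul_transpose_eq_diagonal hCC Qhat B hB]
  simp [hQhat_unit]

/-- Translation of the two sides of the DDVV matrix inequality via the coordinate
matrix `B` and a diagonalization `B Bᵀ = Q diag(x) Qᵀ` with `Q ∈ SO(N)`. -/
theorem ddvv_translation (n m : ℕ) (hn : 0 < n) (hm : 0 < m)
    (Ehat : Fin (n * (n + 1) / 2) → Matrix (Fin n) (Fin n) ℝ)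
    (hEsymm : ∀ α, (Ehat α)ᵀ = Ehat α)
    (hEorth : ∀ α β, frobInner (Ehat α) (Ehat β) = if α = β then 1 else 0)
    (hEspan : ∀ A : Matrix (Fin n) (Fin n) ℝ, Aᵀ = A →
      ∃ c : Fin (n * (n + 1) / 2) → ℝ, A = ∑ α, c α • Ehat α)
    (B : Fin m → Matrix (Fin n) (Fin n) ℝ) (hBsymm : ∀ r, (B r)ᵀ = B r)
    (Bc : Matrix (Fin (n * (n + 1) / 2)) (Fin m) ℝ)
    (hBc : ∀ r, B r = ∑ α, Bc α r • Ehat α)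
    (Q : Matrix (Fin (n * (n + 1) / 2)) (Fin (n * (n + 1) / 2)) ℝ)
    (hQ : Q ∈ Matrix.specialOrthogonalGroup (Fin (n * (n + 1) / 2)) ℝ)
    (x : Fin (n * (n + 1) / 2) → ℝ) (hx : ∀ α, 0 ≤ x α)
    (hdiag : Bc * Bcᵀ = Q * Matrix.diagonal x * Qᵀ)
    (Qhat : Fin (n * (n + 1) / 2) → Matrix (Fin n) (Fin n) ℝ)
    (hQhat : ∀ α, Qhat α = ∑ β, Q β α • Ehat β) :
    (∑ r, frobSq (B r) = ∑ α, x α) ∧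
      (∑ r, ∑ s, frobSq (matComm (B r) (B s)) =
        ∑ α, ∑ β, x α * x β * frobSq (matComm (Qhat α) (Qhat β))) :=
  ddvv_translation_general n m Ehat hEorth B Bc hBc Q hQ x hdiag Qhat hQhat
end

section
/- Let n ≥ 2 and N = n(n+1)/2. Let {Ê_1, ..., Ê_N} be the standard orthonormal basis of the space of real symmetric n×n matrices: for each i, the matrix E_{ii} with (i,i)-entry 1 and all other entries 0, and for each i < j, the matrix (1/√2)(E_{ij} + E_{ji}), where E_{ij} has (i,j)-entry 1 and all other entries 0. Then for all reals x_1, ..., x_N with x_α > 0 for every α, the strict inequality Σ_{α,β=1}^N x_α x_β ‖[Ê_α, Ê_β]‖² < (Σ_{α=1}^N x_α)² holds. -/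
/-!
Each commutator `[Ê_α, Ê_β]` of the standard basis is either `0` or `c • (E_ab - E_ba)` with
`c² ≤ 1/2`, so `‖[Ê_α, Ê_β]‖² ≤ 1`, and it vanishes for `α = β`. Hence the left-hand side is at
most `(∑ x_α)² - ∑ x_α²`, and the positive diagonal weights `x_α²` make the inequality strict.
-/

open Matrix BigOperators

/-- The standard orthonormal basis of the space of real symmetric `n × n` matrices,
indexed by pairs `(i, j)` with `i ≤ j`: `E_{ii}` on the diagonal indices, and
`(1/√2)(E_{ij} + E_{ji})` for `i < j`. -/
noncomputable def stdSymBasis (n : ℕ) (p : {q : Fin n × Fin n // q.1 ≤ q.2}) :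
    Matrix (Fin n) (Fin n) ℝ :=
  if p.val.1 = p.val.2 then Matrix.single p.val.1 p.val.2 1
  else (1 / Real.sqrt 2) •
    (Matrix.single p.val.1 p.val.2 1 + Matrix.single p.val.2 p.val.1 1)

theorem sum_mul_mul_lt_sq_sum_of_le_one {ι : Type*} [Fintype ι] [Nonempty ι] (x : ι → ℝ)
    (hx : ∀ i, 0 < x i) (c : ι → ι → ℝ) (hc_diag : ∀ i, c i i = 0) (hc_le : ∀ i j, c i j ≤ 1) :
    ∑ i, ∑ j, x i * x j * c i j < (∑ i, x i) ^ 2 := by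
  have hdiag : ∑ i, x i * x i ≤ ∑ i, ∑ j, x i * x j * (1 - c i j) := by
    refine Finset.sum_le_sum fun i _ => ?_
    calc x i * x i = x i * x i * (1 - c i i) := by rw [hc_diag, sub_zero, mul_one]
      _ ≤ ∑ j, x i * x j * (1 - c i j) :=
        Finset.single_le_sum (f := fun j => x i * x j * (1 - c i j))
          (fun j _ => mul_nonneg (mul_pos (hx i) (hx j)).le (sub_nonneg.2 (hc_le i j)))
          (Finset.mem_univ i)
  have hpos : 0 < ∑ i, x i * x i :=
    Finset.sum_pos (fun i _ => mul_pos (hx i) (hx i)) Finset.univ_nonempty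
  have hsq : (∑ i, x i) ^ 2 = ∑ i, ∑ j, x i * x j := by rw [sq, Finset.sum_mul_sum]
  simp only [mul_sub, mul_one, Finset.sum_sub_distrib, ← hsq] at hdiag
  linarith

section

variable {n : ℕ}

@[simp]
lemma frobSq_zero : frobSq (0 : Matrix (Fin n) (Fin n) ℝ) = 0 := by simp [frobSq]

lemma frobSq_neg (A : Matrix (Fin n) (Fin n) ℝ) : frobSq (-A) = frobSq A := by simp [frobSq]

lemma frobSq_smul (c : ℝ) (A : Matrix (Fin n) (Fin n) ℝ) :
    frobSq (c • A) = c ^ 2 * frobSq A := by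
  simp [frobSq, Finset.mul_sum, mul_pow]

lemma frobSq_single_sub_single {a b : Fin n} (hab : a ≠ b) :
    frobSq (single a b 1 - single b a 1) = 2 := by
  have hentry : ∀ i j, ((single a b 1 - single b a 1 : Matrix (Fin n) (Fin n) ℝ) i j) ^ 2 =
      (if a = i ∧ b = j then 1 else 0) + (if b = i ∧ a = j then 1 else 0) := by
    intro i j
    rw [Matrix.sub_apply, single_apply, single_apply]
    split_ifs <;> simp_all
  simp only [frobSq, hentry, Finset.sum_add_distrib, ite_and]
  norm_num

@[simp]
lemma matComm_self (A : Matrix (Fin n) (Fin n) ℝ) : matComm A A = 0 := sub_self _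

lemma matComm_swap (A B : Matrix (Fin n) (Fin n) ℝ) : matComm B A = -matComm A B :=
  (neg_sub _ _).symm

lemma matComm_smul_smul (c d : ℝ) (A B : Matrix (Fin n) (Fin n) ℝ) :
    matComm (c • A) (d • B) = (c * d) • matComm A B := by
  simp [matComm, smul_sub, smul_smul, mul_comm]

lemma matComm_smul_right (c : ℝ) (A B : Matrix (Fin n) (Fin n) ℝ) :
    matComm A (c • B) = c • matComm A B := by
  simpa using matComm_smul_smul 1 c A B

def symUnit (a b : Fin n) : Matrix (Fin n) (Fin n) ℝ := single a b 1 + single b a 1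

lemma symUnit_comm (a b : Fin n) : symUnit a b = symUnit b a := add_comm _ _

lemma matComm_single_single_diag (a c : Fin n) :
    matComm (single a a (1 : ℝ)) (single c c 1) = 0 := by
  by_cases h : a = c
  · subst h; exact matComm_self _
  · simp [matComm, h, Ne.symm h]

lemma matComm_single_diag_symUnit {a b : Fin n} (hab : a ≠ b) :
    matComm (single a a 1) (symUnit a b) = single a b 1 - single b a 1 := by
  simp [matComm, symUnit, mul_add, add_mul, hab, Ne.symm hab]

lemma matComm_single_diag_symUnit_of_ne {a c d : Fin n} (hc : a ≠ c) (hd : a ≠ d) :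
    matComm (single a a 1) (symUnit c d) = 0 := by
  simp [matComm, symUnit, mul_add, add_mul, hc, hd, Ne.symm hc, Ne.symm hd]

lemma matComm_symUnit_symUnit {a b c : Fin n} (hab : a ≠ b) (hbc : b ≠ c) (hac : a ≠ c) :
    matComm (symUnit a b) (symUnit b c) = single a c 1 - single c a 1 := by
  simp [matComm, symUnit, mul_add, add_mul, hab, hbc, hac, Ne.symm hab, Ne.symm hbc, Ne.symm hac]

lemma matComm_symUnit_symUnit_of_ne {a b c d : Fin n} (hac : a ≠ c) (had : a ≠ d) (hbc : b ≠ c)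
    (hbd : b ≠ d) : matComm (symUnit a b) (symUnit c d) = 0 := by
  simp [matComm, symUnit, mul_add, add_mul, hac, had, hbc, hbd, Ne.symm hac, Ne.symm had,
    Ne.symm hbc, Ne.symm hbd]

lemma frobSq_matComm_single_diag_symUnit_le (i : Fin n) {k l : Fin n} (hkl : k ≠ l) :
    frobSq (matComm (single i i 1) (symUnit k l)) ≤ 2 := by
  by_cases hk : i = k
  · subst hk
    rw [matComm_single_diag_symUnit hkl, frobSq_single_sub_single hkl]
  by_cases hl : i = l
  · subst hl
    rw [symUnit_comm, matComm_single_diag_symUnit hkl.symm, frobSq_single_sub_single hkl.symm]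
  rw [matComm_single_diag_symUnit_of_ne hk hl, frobSq_zero]
  norm_num

lemma frobSq_matComm_symUnit_symUnit_le {i j k l : Fin n} (hij : i ≠ j) (hkl : k ≠ l) :
    frobSq (matComm (symUnit i j) (symUnit k l)) ≤ 2 := by
  by_cases hi : i = k ∨ i = l <;> by_cases hj : j = k ∨ j = l
  · have hsame : symUnit i j = symUnit k l := by
      rcases hi with rfl | rfl <;> rcases hj with rfl | rfl
      exacts [absurd rfl hij, rfl, symUnit_comm i j, absurd rfl hij]
    rw [hsame, matComm_self, frobSq_zero]
    norm_num
  · obtain ⟨hjk, hjl⟩ := not_or.1 hj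
    rcases hi with rfl | rfl
    · rw [symUnit_comm i j, matComm_symUnit_symUnit hij.symm hkl hjl]
      exact (frobSq_single_sub_single hjl).le
    · rw [symUnit_comm i j, symUnit_comm k i, matComm_symUnit_symUnit hij.symm hkl.symm hjk]
      exact (frobSq_single_sub_single hjk).le
  · obtain ⟨hik, hil⟩ := not_or.1 hi
    rcases hj with rfl | rfl
    · rw [matComm_symUnit_symUnit hij hkl hil]
      exact (frobSq_single_sub_single hil).le
    · rw [symUnit_comm k j, matComm_symUnit_symUnit hij hkl.symm hik]
      exact (frobSq_single_sub_single hik).le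
  · obtain ⟨hik, hil⟩ := not_or.1 hi
    obtain ⟨hjk, hjl⟩ := not_or.1 hj
    rw [matComm_symUnit_symUnit_of_ne hik hil hjk hjl, frobSq_zero]
    norm_num

lemma stdSymBasis_of_eq {p : {q : Fin n × Fin n // q.1 ≤ q.2}} (h : p.1.1 = p.1.2) :
    stdSymBasis n p = single p.1.1 p.1.1 1 := by
  rw [stdSymBasis, if_pos h, h]

lemma stdSymBasis_of_ne {p : {q : Fin n × Fin n // q.1 ≤ q.2}} (h : p.1.1 ≠ p.1.2) :
    stdSymBasis n p = (1 / Real.sqrt 2) • symUnit p.1.1 p.1.2 :=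
  if_neg h

lemma frobSq_matComm_stdSymBasis_le_one (p q : {q : Fin n × Fin n // q.1 ≤ q.2}) :
    frobSq (matComm (stdSymBasis n p) (stdSymBasis n q)) ≤ 1 := by
  obtain ⟨⟨i, j⟩, hij⟩ := p
  obtain ⟨⟨k, l⟩, hkl⟩ := q
  have hsq : (1 / Real.sqrt 2) ^ 2 = 1 / 2 := by rw [div_pow, Real.sq_sqrt zero_le_two, one_pow]
  rcases eq_or_ne i j with rfl | hij' <;> rcases eq_or_ne k l with rfl | hkl'
  · rw [stdSymBasis_of_eq rfl, stdSymBasis_of_eq rfl, matComm_single_single_diag, frobSq_zero]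
    norm_num
  · rw [stdSymBasis_of_eq rfl, stdSymBasis_of_ne hkl', matComm_smul_right, frobSq_smul, hsq]
    linarith [frobSq_matComm_single_diag_symUnit_le i hkl']
  · rw [stdSymBasis_of_ne hij', stdSymBasis_of_eq rfl, matComm_swap, frobSq_neg,
      matComm_smul_right, frobSq_smul, hsq]
    linarith [frobSq_matComm_single_diag_symUnit_le k hij']
  · rw [stdSymBasis_of_ne hij', stdSymBasis_of_ne hkl', matComm_smul_smul, frobSq_smul, mul_pow,
      hsq]
    linarith [frobSq_matComm_symUnit_symUnit_le hij' hkl']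

end

/-- For the standard orthonormal basis of symmetric matrices, the DDVV polynomial
inequality is strict on the positive orthant. -/
theorem ddvv_strict_on_std_basis (n : ℕ) (hn : 2 ≤ n)
    (x : {q : Fin n × Fin n // q.1 ≤ q.2} → ℝ) (hx : ∀ p, 0 < x p) :
    ∑ p, ∑ q, x p * x q * frobSq (matComm (stdSymBasis n p) (stdSymBasis n q)) <
      (∑ p, x p) ^ 2 := by
  have : Nonempty {q : Fin n × Fin n // q.1 ≤ q.2} :=
    ⟨⟨(⟨0, by omega⟩, ⟨0, by omega⟩), le_rfl⟩⟩
  exact sum_mul_mul_lt_sq_sum_of_le_one x hx _ (fun p => by simp) frobSq_matComm_stdSymBasis_le_one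
end
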